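/- If U and V are independent and uniformly distributed on [0,1], then T = -U² ln(V)/α has probability density g(t) = α√π Φ(-√(2αt))/√(αt) on (0,∞). -/

import Mathlib

open MeasureTheory Set Real ProbabilityTheory

/-- The standard normal distribution function Φ. -/
noncomputable def Phi (z : ℝ) : ℝ :=
  (Real.sqrt (2 * Real.pi))⁻¹ * ∫ y in Set.Iic z, Real.exp (-y ^ 2 / 2)

/-- The modified exponential density, extended by 0 off (0,∞). -/
noncomputable def modExpPdf (α t : ℝ) : ℝ :=
  if 0 < t then α * Real.sqrt Real.pi * Phi (-Real.sqrt (2 * α * t)) / Real.sqrt (α * t)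
  else 0

/-!
Conditionally on `U = u`, the variable `T = -log V / (α / u²)` is exponential with rate `α / u²`,
so the law of `T` is the scale mixture `∫₀¹ Exp(α / u²) du`. The substitution `y = √(2αt) / u`
turns the Gaussian tail `Φ(-√(2αt))` into `∫₀¹ (α / u²) exp(-αt / u²) du`, up to the constant
factors of `g`, so `g` is the density of that mixture.
-/

open scoped ENNReal

theorem image_const_div_Ioo_zero_one {c : ℝ} (hc : 0 < c) :
    (fun u : ℝ ↦ c / u) '' Ioo 0 1 = Ioi c := by
  ext y
  simp only [mem_image, mem_Ioo, mem_Ioi]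
  constructor
  · rintro ⟨u, ⟨hu0, hu1⟩, rfl⟩
    rwa [lt_div_iff₀ hu0, mul_lt_iff_lt_one_right hc]
  · intro hy
    have hy0 : 0 < y := hc.trans hy
    exact ⟨c / y, ⟨div_pos hc hy0, (div_lt_one hy0).mpr hy⟩, div_div_cancel₀ hc.ne'⟩

theorem lintegral_Ioi_eq_lintegral_Ioo_const_div {c : ℝ} (hc : 0 < c) (f : ℝ → ℝ≥0∞) :
    ∫⁻ y in Ioi c, f y = ∫⁻ u in Ioo 0 1, ENNReal.ofReal (c / u ^ 2) * f (c / u) := by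
  have hderiv : ∀ u ∈ Ioo (0 : ℝ) 1,
      HasDerivWithinAt (fun u ↦ c / u) (-(c / u ^ 2)) (Ioo 0 1) u := fun u hu ↦ by
    simpa [div_eq_mul_inv] using ((hasDerivAt_inv hu.1.ne').const_mul c).hasDerivWithinAt
  have hinj : InjOn (fun u : ℝ ↦ c / u) (Ioo 0 1) := fun a _ b _ h ↦
    inv_injective (mul_left_cancel₀ hc.ne' h)
  rw [← image_const_div_Ioo_zero_one hc,
    lintegral_image_eq_lintegral_abs_deriv_mul measurableSet_Ioo hderiv hinj]
  refine setLIntegral_congr_fun measurableSet_Ioo fun u hu ↦ ?_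
  rw [abs_neg, abs_of_pos (div_pos hc (pow_pos hu.1 2))]

theorem map_neg_log_div_uniform_eq_expMeasure {r : ℝ} (hr : 0 < r) :
    (volume.restrict (Icc (0 : ℝ) 1)).map (fun v ↦ -log v / r) = expMeasure r := by
  have hmeas : Measurable fun v : ℝ ↦ -log v / r := by fun_prop
  have := isProbabilityMeasure_expMeasure hr
  refine (Measure.ext_of_Iic _ _ fun t ↦ ?_).symm
  have hpre : (fun v ↦ -log v / r) ⁻¹' Iic t ∩ Ioc 0 1 = Icc (exp (-(r * t))) 1 := by
    ext v
    simp only [mem_inter_iff, mem_preimage, mem_Iic, mem_Ioc, mem_Icc]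
    constructor
    · rintro ⟨hvt, hv0, hv1⟩
      refine ⟨?_, hv1⟩
      rw [div_le_iff₀ hr] at hvt
      rw [← le_log_iff_exp_le hv0]
      linarith
    · rintro ⟨hv, hv1⟩
      have hv0 : 0 < v := (exp_pos _).trans_le hv
      rw [← le_log_iff_exp_le hv0] at hv
      refine ⟨?_, hv0, hv1⟩
      rw [div_le_iff₀ hr]
      linarith
  rw [expMeasure, gammaMeasure, withDensity_apply _ measurableSet_Iic,
    Measure.map_apply hmeas measurableSet_Iic, ← Measure.restrict_congr_set Ioc_ae_eq_Icc,
    Measure.restrict_apply (hmeas measurableSet_Iic), hpre, volume_Icc]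
  change ∫⁻ x in Iic t, exponentialPDF r x = _
  rw [lintegral_exponentialPDF_eq_antiDeriv hr t]
  split_ifs with ht
  · rfl
  · rw [ENNReal.ofReal_zero, eq_comm, ENNReal.ofReal_eq_zero, sub_nonpos, one_le_exp_iff]
    nlinarith

theorem map_prodMk_eq_cond_prod_cond_of_isUniform {Ω E F : Type*} [MeasurableSpace Ω]
    [MeasurableSpace E] [MeasurableSpace F] {P : Measure Ω} {μ : Measure E} {ν : Measure F}
    {X : Ω → E} {Y : Ω → F} {s : Set E} {t : Set F} (hμs : μ s ≠ 0) (hμs' : μ s ≠ ∞)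
    (hνt : ν t ≠ 0) (hνt' : ν t ≠ ∞) (hX : pdf.IsUniform X s P μ) (hY : pdf.IsUniform Y t P ν)
    (hXY : IndepFun X Y P) :
    P.map (fun ω ↦ (X ω, Y ω)) = (μ[|s]).prod (ν[|t]) := by
  have := hX.isProbabilityMeasure hμs hμs'
  rw [(indepFun_iff_map_prod_eq_prod_map_map (hX.aemeasurable hμs hμs')
    (hY.aemeasurable hνt hνt')).mp hXY, hX, hY]

theorem measurable_exponentialPDF_div_sq (α : ℝ) :
    Measurable fun p : ℝ × ℝ ↦ exponentialPDF (α / p.2 ^ 2) p.1 := by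
  simp only [exponentialPDF_eq]
  exact ENNReal.measurable_ofReal.comp <|
    Measurable.ite (measurableSet_le measurable_const measurable_fst) (by fun_prop)
      measurable_const

theorem ofReal_modExpPdf_eq_lintegral {α x : ℝ} (hα : 0 < α) (hx : 0 < x) :
    ENNReal.ofReal (modExpPdf α x) = ∫⁻ u in Icc 0 1, exponentialPDF (α / u ^ 2) x := by
  set c := √(2 * α * x) with hc_def
  have hc : 0 < c := by positivity
  have hc_sq : c ^ 2 = 2 * α * x := sq_sqrt (by positivity)
  have hgauss : Integrable fun y : ℝ ↦ exp (-y ^ 2 / 2) := by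
    simpa [neg_div, div_eq_inv_mul] using integrable_exp_neg_mul_sq (b := 1 / 2) (by norm_num)
  have hpdf : modExpPdf α x = α / c * ∫ y in Ioi c, exp (-y ^ 2 / 2) := by
    have hPhi : Phi (-c) = (√(2 * π))⁻¹ * ∫ y in Ioi c, exp (-y ^ 2 / 2) := by
      have := integral_comp_neg_Iic (-c) (fun y ↦ exp (-y ^ 2 / 2))
      simp only [neg_sq, neg_neg] at this
      rw [Phi, this]
    have hsqrt_two_pi : √(2 * π) = √2 * √π := sqrt_mul zero_le_two π
    have hc_eq : c = √2 * √(α * x) := by rw [hc_def, mul_assoc, sqrt_mul zero_le_two]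
    rw [modExpPdf, if_pos hx, hPhi, hsqrt_two_pi, hc_eq]
    field_simp
  rw [hpdf, ENNReal.ofReal_mul (by positivity),
    ofReal_integral_eq_lintegral_ofReal hgauss.integrableOn
      (ae_of_all _ fun _ ↦ (exp_pos _).le),
    lintegral_Ioi_eq_lintegral_Ioo_const_div hc, ← lintegral_const_mul' _ _ ENNReal.ofReal_ne_top,
    ← setLIntegral_congr Ioo_ae_eq_Icc]
  refine setLIntegral_congr_fun measurableSet_Ioo fun u hu ↦ ?_
  have hu : u ≠ 0 := hu.1.ne'
  rw [exponentialPDF_of_nonneg hx.le, ← ENNReal.ofReal_mul (by positivity),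
    ← ENNReal.ofReal_mul (by positivity)]
  congr 1
  rw [div_pow, hc_sq]
  field_simp

theorem modExpPdf_ae_eq_lintegral {α : ℝ} (hα : 0 < α) :
    (fun t ↦ ENNReal.ofReal (modExpPdf α t))
      =ᵐ[volume] fun t ↦ ∫⁻ u in Icc 0 1, exponentialPDF (α / u ^ 2) t := by
  filter_upwards [volume.ae_ne 0] with t ht
  rcases ht.lt_or_gt with ht | ht
  · simp [modExpPdf, ht.not_gt, exponentialPDF_of_neg ht]
  · exact ofReal_modExpPdf_eq_lintegral hα ht

theorem withDensity_modExpPdf_apply {α : ℝ} (hα : 0 < α) {s : Set ℝ} (hs : MeasurableSet s) :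
    volume.withDensity (fun t ↦ ENNReal.ofReal (modExpPdf α t)) s
      = ∫⁻ u in Icc 0 1, expMeasure (α / u ^ 2) s := by
  rw [withDensity_congr_ae (modExpPdf_ae_eq_lintegral hα), withDensity_apply _ hs,
    lintegral_lintegral_swap (measurable_exponentialPDF_div_sq α).aemeasurable]
  congr with u
  rw [expMeasure, gammaMeasure, withDensity_apply _ hs]
  rfl

theorem map_neg_sq_mul_log_div_uniform_apply {α : ℝ} (hα : 0 < α) {s : Set ℝ}
    (hs : MeasurableSet s) :
    ((volume.restrict (Icc (0 : ℝ) 1)).prod (volume.restrict (Icc (0 : ℝ) 1))).map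
      (fun p ↦ -p.1 ^ 2 * log p.2 / α) s = ∫⁻ u in Icc 0 1, expMeasure (α / u ^ 2) s := by
  have hmeas : Measurable fun p : ℝ × ℝ ↦ -p.1 ^ 2 * log p.2 / α := by fun_prop
  rw [Measure.map_apply hmeas hs, Measure.prod_apply (hmeas hs)]
  refine lintegral_congr_ae ?_
  filter_upwards [ae_restrict_of_ae (volume.ae_ne 0)] with u hu
  have hr : 0 < α / u ^ 2 := by positivity
  rw [← map_neg_log_div_uniform_eq_expMeasure hr, Measure.map_apply (by fun_prop) hs]
  congr 1
  ext v
  simp only [mem_preimage]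
  field_simp

theorem modified_exponential_random_numbers_general
    {Ω : Type*} [MeasureSpace Ω]
    (α : ℝ) (hα : 0 < α) (U V : Ω → ℝ)
    (hU : MeasureTheory.pdf.IsUniform U (Set.Icc (0:ℝ) 1) ℙ volume)
    (hV : MeasureTheory.pdf.IsUniform V (Set.Icc (0:ℝ) 1) ℙ volume)
    (hUV : IndepFun U V ℙ) :
    Measure.map (fun ω => -(U ω) ^ 2 * Real.log (V ω) / α) ℙ
      = volume.withDensity (fun t => ENNReal.ofReal (modExpPdf α t)) := by
  have hunit_ne_zero : volume (Icc (0 : ℝ) 1) ≠ 0 := by simp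
  have hunit_ne_top : volume (Icc (0 : ℝ) 1) ≠ ∞ := by simp
  have hunif : (volume : Measure ℝ)[|Icc 0 1] = volume.restrict (Icc 0 1) := by
    simp [ProbabilityTheory.cond]
  have hlaw := map_prodMk_eq_cond_prod_cond_of_isUniform hunit_ne_zero hunit_ne_top
    hunit_ne_zero hunit_ne_top hU hV hUV
  have hg : Measurable fun p : ℝ × ℝ ↦ -p.1 ^ 2 * log p.2 / α := by fun_prop
  rw [show (fun ω ↦ -(U ω) ^ 2 * log (V ω) / α)
      = (fun p : ℝ × ℝ ↦ -p.1 ^ 2 * log p.2 / α) ∘ fun ω ↦ (U ω, V ω) from rfl,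
    ← AEMeasurable.map_map_of_aemeasurable hg.aemeasurable
      ((hU.aemeasurable hunit_ne_zero hunit_ne_top).prodMk
        (hV.aemeasurable hunit_ne_zero hunit_ne_top)),
    hlaw, hunif]
  ext s hs
  rw [map_neg_sq_mul_log_div_uniform_apply hα hs, withDensity_modExpPdf_apply hα hs]

/-- if U, V are independent uniform [0,1] random variables then
T = -U² ln(V)/α has density g(t) = α√π Φ(-√(2αt))/√(αt) on (0,∞). -/
theorem modified_exponential_random_numbers
    {Ω : Type*} [MeasureSpace Ω] [IsProbabilityMeasure (ℙ : Measure Ω)]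
    (α : ℝ) (hα : 0 < α) (U V : Ω → ℝ)
    (hU : MeasureTheory.pdf.IsUniform U (Set.Icc (0:ℝ) 1) ℙ volume)
    (hV : MeasureTheory.pdf.IsUniform V (Set.Icc (0:ℝ) 1) ℙ volume)
    (hUV : IndepFun U V ℙ)
    (hUm : Measurable U) (hVm : Measurable V) :
    Measure.map (fun ω => -(U ω) ^ 2 * Real.log (V ω) / α) ℙ
      = volume.withDensity (fun t => ENNReal.ofReal (modExpPdf α t)) :=
  modified_exponential_random_numbers_general α hα U V hU hV hUV
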